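/- Let (C, E, s) be a Frobenius extriangulated category with finite-dimensional Hom-spaces and T ∈ C basic rigid. The following are equivalent: (a) every X ∈ C admits a conflation X → T_0 → T_1 with T_0, T_1 ∈ Add(T); (b) for every X ∈ C, E(T, X) = 0 implies X ∈ Add(T). Consequently, if C is moreover extriangulated 2-Calabi–Yau (E(X,Y) ≅ E(Y,X)^* bifunctorially), then T is cluster tilting if and only if (a)/(b) hold. -/

import Mathlib

/-!
STATEMENT 8: Let (C, E, s) be a Frobenius extriangulated category with
finite-dimensional Hom-spaces and T basic rigid.  Then
(a) every X admits a conflation X → T₀ → T₁ with T₀, T₁ ∈ Add(T)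
is equivalent to
(b) for every X, E(T,X) = 0 implies X ∈ Add(T).
Consequently, if C is moreover extriangulated 2-Calabi–Yau, then T is cluster
tilting (i.e. every X admits a conflation T₁ → T₀ → X with T₀, T₁ ∈ Add(T))
if and only if (a)/(b) hold.
-/

open CategoryTheory Limits Opposite

universe v u u_1

variable (k : Type) [Field k]

/-- A (k-linear) extriangulated category structure in the sense of Nakaoka–Palu on a
preadditive k-linear category `C`: a biadditive extension functor `E`, a realization
relation `realizes α f g` expressing that the conflation `A → B → Z` realizes the
extension `α ∈ E(Z, A)`, together with the axioms used in this paper: existence of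
realizations, split = zero, and the long exact `Hom`–`E` sequences associated to a
conflation (Nakaoka–Palu; Gorsky–Nakaoka–Palu Thm 3.5). -/
structure Extriangulated (C : Type u) [Category.{v} C] [Preadditive C]
    [CategoryTheory.Linear k C] where
  E : Cᵒᵖ ⥤ C ⥤ ModuleCat.{u_1} k
  realizes : ∀ {A Z : C}, ((E.obj (op Z)).obj A) → ∀ {B : C}, (A ⟶ B) → (B ⟶ Z) → Prop
  realize_exists : ∀ {A Z : C} (α : (E.obj (op Z)).obj A),
    ∃ (B : C) (f : A ⟶ B) (g : B ⟶ Z), realizes α f g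
  comp_zero : ∀ {A Z B : C} (α : (E.obj (op Z)).obj A) (f : A ⟶ B) (g : B ⟶ Z),
    realizes α f g → f ≫ g = 0
  realizes_zero : ∀ {A Z B : C} (f : A ⟶ B) (g : B ⟶ Z),
    realizes (0 : (E.obj (op Z)).obj A) f g →
      (∃ r : B ⟶ A, f ≫ r = 𝟙 A) ∧ (∃ s : Z ⟶ B, s ≫ g = 𝟙 Z)
  split_zero : ∀ {A Z B : C} (α : (E.obj (op Z)).obj A) (f : A ⟶ B) (g : B ⟶ Z),
    realizes α f g → (∃ r : B ⟶ A, f ≫ r = 𝟙 A) → α = 0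
  ex₁ : ∀ {A Z B T : C} (α : (E.obj (op Z)).obj A) (f : A ⟶ B) (g : B ⟶ Z),
    realizes α f g → ∀ (h : T ⟶ B), h ≫ g = 0 → ∃ h' : T ⟶ A, h' ≫ f = h
  ex₂ : ∀ {A Z B T : C} (α : (E.obj (op Z)).obj A) (f : A ⟶ B) (g : B ⟶ Z),
    realizes α f g → ∀ (h : T ⟶ Z), ((E.map h.op).app A) α = 0 → ∃ h' : T ⟶ B, h' ≫ g = h
  ex₂' : ∀ {A Z B T : C} (α : (E.obj (op Z)).obj A) (f : A ⟶ B) (g : B ⟶ Z),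
    realizes α f g → ∀ (h' : T ⟶ B), ((E.map (h' ≫ g).op).app A) α = 0
  ex₃ : ∀ {A Z B T : C} (α : (E.obj (op Z)).obj A) (f : A ⟶ B) (g : B ⟶ Z),
    realizes α f g → ∀ (β : (E.obj (op T)).obj A), ((E.obj (op T)).map f) β = 0 →
      ∃ h : T ⟶ Z, ((E.map h.op).app A) α = β
  ex₃' : ∀ {A Z B T : C} (α : (E.obj (op Z)).obj A) (f : A ⟶ B) (g : B ⟶ Z),
    realizes α f g → ∀ (h : T ⟶ Z), ((E.obj (op T)).map f) (((E.map h.op).app A) α) = 0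
  ex₄ : ∀ {A Z B T : C} (α : (E.obj (op Z)).obj A) (f : A ⟶ B) (g : B ⟶ Z),
    realizes α f g → ∀ (h : B ⟶ T), f ≫ h = 0 → ∃ h' : Z ⟶ T, g ≫ h' = h
  ex₅ : ∀ {A Z B T : C} (α : (E.obj (op Z)).obj A) (f : A ⟶ B) (g : B ⟶ Z),
    realizes α f g → ∀ (h : A ⟶ T), ((E.obj (op Z)).map h) α = 0 → ∃ h' : B ⟶ T, f ≫ h' = h
  ex₅' : ∀ {A Z B T : C} (α : (E.obj (op Z)).obj A) (f : A ⟶ B) (g : B ⟶ Z),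
    realizes α f g → ∀ (h' : B ⟶ T), ((E.obj (op Z)).map (f ≫ h')) α = 0
  ex₆ : ∀ {A Z B T : C} (α : (E.obj (op Z)).obj A) (f : A ⟶ B) (g : B ⟶ Z),
    realizes α f g → ∀ (β : (E.obj (op Z)).obj T), ((E.map g.op).app T) β = 0 →
      ∃ h : A ⟶ T, ((E.obj (op Z)).map h) α = β
  ex₆' : ∀ {A Z B T : C} (α : (E.obj (op Z)).obj A) (f : A ⟶ B) (g : B ⟶ Z),
    realizes α f g → ∀ (h : A ⟶ T), ((E.map g.op).app T) (((E.obj (op Z)).map h) α) = 0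

namespace Extriangulated

variable {k} {C : Type u} [Category.{v} C] [Preadditive C] [CategoryTheory.Linear k C]
  [HasFiniteBiproducts C]

/-- `(f, g)` is a conflation: it realizes some extension class. -/
def Conflation (σ : Extriangulated k C) {A B Z : C} (f : A ⟶ B) (g : B ⟶ Z) : Prop :=
  ∃ α, σ.realizes α f g

/-- `P` is projective: `E(P, X) = 0` for all `X`. -/
def Projective (σ : Extriangulated k C) (P : C) : Prop :=
  ∀ (X : C) (α : (σ.E.obj (op P)).obj X), α = 0

/-- `I` is injective: `E(X, I) = 0` for all `X`. -/
def Injective (σ : Extriangulated k C) (I : C) : Prop :=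
  ∀ (X : C) (α : (σ.E.obj (op X)).obj I), α = 0

/-- `C` has enough projectives: every `X` admits a conflation `K → P → X` with `P`
projective. -/
def EnoughProjectives (σ : Extriangulated k C) : Prop :=
  ∀ X : C, ∃ (K P : C) (f : K ⟶ P) (g : P ⟶ X),
    σ.Conflation f g ∧ σ.Projective P

/-- `C` has enough injectives: every `X` admits a conflation `X → I → K` with `I`
injective. -/
def EnoughInjectives (σ : Extriangulated k C) : Prop :=
  ∀ X : C, ∃ (I K : C) (f : X ⟶ I) (g : I ⟶ K),
    σ.Conflation f g ∧ σ.Injective I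

/-- Frobenius: enough projectives and injectives, and the two classes coincide. -/
def Frobenius (σ : Extriangulated k C) : Prop :=
  σ.EnoughProjectives ∧ σ.EnoughInjectives ∧ ∀ X : C, (σ.Projective X ↔ σ.Injective X)

/-- `T` is rigid: `E(T, T) = 0`. -/
def Rigid (σ : Extriangulated k C) (T : C) : Prop :=
  ∀ α : (σ.E.obj (op T)).obj T, α = 0

/-- `σ` is extriangulated 2-Calabi–Yau: there is a bifunctorial duality
`E(X,Y) ≅ E(Y,X)^*`. -/
def CY2 (σ : Extriangulated k C) : Prop :=
  ∃ e : ∀ X Y : C,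
      ((σ.E.obj (op X)).obj Y) ≃ₗ[k] Module.Dual k ((σ.E.obj (op Y)).obj X),
    (∀ (X X' Y : C) (f : X' ⟶ X) (β : (σ.E.obj (op X)).obj Y)
        (γ : (σ.E.obj (op Y)).obj X'),
      e X' Y (((σ.E.map f.op).app Y) β) γ = e X Y β (((σ.E.obj (op Y)).map f) γ)) ∧
    (∀ (X Y Y' : C) (g : Y' ⟶ Y) (β : (σ.E.obj (op X)).obj Y')
        (γ : (σ.E.obj (op Y)).obj X),
      e X Y (((σ.E.obj (op X)).map g) β) γ = e X Y' β (((σ.E.map g.op).app X) γ))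

end Extriangulated

/-- `X` is in the additive closure of `T`: a retract of a finite direct sum of copies
of `T`. -/
def InAdd {C : Type u} [Category.{v} C] [Preadditive C] [HasFiniteBiproducts C]
    (T X : C) : Prop :=
  ∃ (n : ℕ) (s : X ⟶ ⨁ (fun _ : Fin n => T)) (r : (⨁ fun _ : Fin n => T) ⟶ X),
    s ≫ r = 𝟙 X

/-- `X` is indecomposable. -/
def Indecomposable {C : Type u} [Category.{v} C] [Preadditive C] [HasFiniteBiproducts C]
    (X : C) : Prop :=
  letI := hasBinaryBiproducts_of_finite_biproducts C
  ¬ IsZero X ∧ ∀ Y Z : C, Nonempty (X ≅ Y ⊞ Z) → IsZero Y ∨ IsZero Z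

/-- `T` is basic: it decomposes into finitely many pairwise non-isomorphic
indecomposable direct summands. -/
def Basic {C : Type u} [Category.{v} C] [Preadditive C] [HasFiniteBiproducts C]
    (T : C) : Prop :=
  ∃ (n : ℕ) (M : Fin n → C), (∀ i, Indecomposable (M i)) ∧
    (∀ i j, i ≠ j → IsEmpty (M i ≅ M j)) ∧ Nonempty (T ≅ ⨁ M)


/-!
(a) ⇒ (b): if `E(T, X) = 0`, the class of a conflation `X → T₀ → T₁` lies in `E(T₁, X) = 0`,
so `X` is a direct summand of `T₀`.

(b) ⇒ (a): take `X → I → K` with `I` injective and a right `Add T`-approximation `T₀ → K`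
(finite-dimensional Homs), and pull the conflation back to `X → M → T₀`. Every extension in
`E(T, X)` is pulled back from `K` along a map factoring through `T₀`, so it dies in `E(T, M)`;
since also `E(T, T₀) = 0`, exactness forces `E(T, M) = 0`, i.e. `M ∈ Add T`.

The same argument in the opposite extriangulated category shows that resolutions
`T₁ → T₀ → X` exist iff `E(X, T) = 0` implies `X ∈ Add T`. In the 2-Calabi–Yau case
`E(X, T) = 0 ↔ E(T, X) = 0`, so this is condition (b).
-/

namespace CategoryTheory

variable {k} {C : Type u} [Category.{v} C] [Preadditive C] [Linear k C]

instance : Linear k Cᵒᵖ where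
  homModule X Y := Equiv.module k (opEquiv X Y)
  smul_comp _ _ _ _ _ _ := Quiver.Hom.unop_inj (Linear.comp_smul _ _ _ _ _ _)
  comp_smul _ _ _ _ _ _ := Quiver.Hom.unop_inj (Linear.smul_comp _ _ _ _ _ _)

instance {X Y : Cᵒᵖ} [FiniteDimensional k (Y.unop ⟶ X.unop)] : FiniteDimensional k (X ⟶ Y) :=
  Module.Finite.equiv ((opEquiv X Y).linearEquiv k).symm

instance [HasFiniteBiproducts C] : HasFiniteBiproducts Cᵒᵖ :=
  HasFiniteBiproducts.of_hasFiniteProducts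

namespace ObjectProperty

instance (P : ObjectProperty C) [P.IsStableUnderRetracts] : P.op.IsStableUnderRetracts where
  of_retract h hY := P.prop_of_retract ⟨h.r.unop, h.i.unop, Quiver.Hom.op_inj h.retract⟩ hY

def IsContravariantlyFinite (P : ObjectProperty C) : Prop :=
  ∀ K : C, ∃ (T₀ : C) (g : T₀ ⟶ K), P T₀ ∧ ∀ ⦃W : C⦄, P W → ∀ u : W ⟶ K, ∃ v, v ≫ g = u

def IsCovariantlyFinite (P : ObjectProperty C) : Prop :=
  P.op.IsContravariantlyFinite

end ObjectProperty

end CategoryTheory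

namespace Extriangulated

variable {k} {C : Type u} [Category.{v} C] [Preadditive C] [Linear k C] (σ : Extriangulated k C)

def ExtVanishes (X Y : C) : Prop :=
  ∀ α : (σ.E.obj (op X)).obj Y, α = 0

theorem eq_zero_of_realizes_of_comp_eq_id {A B Z : C} {α : (σ.E.obj (op Z)).obj A} {f : A ⟶ B}
    {g : B ⟶ Z} (h : σ.realizes α f g) {s : Z ⟶ B} (hs : s ≫ g = 𝟙 Z) : α = 0 := by
  simpa [hs] using σ.ex₂' α f g h s

theorem extVanishes_of_isZero (Z : C) {O : C} (hO : IsZero O) : σ.ExtVanishes Z O := fun x => by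
  obtain ⟨B, f, g, h⟩ := σ.realize_exists x
  exact σ.split_zero x f g h ⟨0, hO.eq_of_src _ _⟩

theorem eq_zero_of_push_fst_of_push_snd {Z X Y : C} [HasBinaryBiproduct X Y]
    (x : (σ.E.obj (op Z)).obj (X ⊞ Y)) (h₁ : (σ.E.obj (op Z)).map biprod.fst x = 0)
    (h₂ : (σ.E.obj (op Z)).map biprod.snd x = 0) : x = 0 := by
  obtain ⟨B, a, b, hr⟩ := σ.realize_exists x
  obtain ⟨p₁, hp₁⟩ := σ.ex₅ x a b hr biprod.fst h₁
  obtain ⟨p₂, hp₂⟩ := σ.ex₅ x a b hr biprod.snd h₂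
  exact σ.split_zero x a b hr ⟨biprod.lift p₁ p₂, by ext <;> simp [hp₁, hp₂]⟩

/-- A conflation `A → B → Z` of `Cᵒᵖ` realizing `α ∈ E(A.unop, Z.unop)` is the conflation
`Z.unop → B.unop → A.unop` of `C` realizing `α`. -/
def opposite : Extriangulated k Cᵒᵖ where
  E := unopUnop C ⋙ σ.E.flip
  realizes α _ f g := σ.realizes α g.unop f.unop
  realize_exists α := by
    obtain ⟨B, f, g, h⟩ := σ.realize_exists α
    exact ⟨op B, g.op, f.op, h⟩
  comp_zero α _ _ h := Quiver.Hom.unop_inj (σ.comp_zero α _ _ h)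
  realizes_zero _ _ h := by
    obtain ⟨⟨r, hr⟩, ⟨s, hs⟩⟩ := σ.realizes_zero _ _ h
    exact ⟨⟨s.op, Quiver.Hom.unop_inj hs⟩, ⟨r.op, Quiver.Hom.unop_inj hr⟩⟩
  split_zero α _ _ h := fun ⟨r, hr⟩ =>
    σ.eq_zero_of_realizes_of_comp_eq_id h (Quiver.Hom.op_inj hr)
  ex₁ α _ _ h t ht := by
    obtain ⟨t', h'⟩ := σ.ex₄ α _ _ h t.unop (congrArg Quiver.Hom.unop ht)
    exact ⟨t'.op, Quiver.Hom.unop_inj h'⟩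
  ex₂ α _ _ h t ht := by
    obtain ⟨t', h'⟩ := σ.ex₅ α _ _ h t.unop ht
    exact ⟨t'.op, Quiver.Hom.unop_inj h'⟩
  ex₂' α _ _ h t := σ.ex₅' α _ _ h t.unop
  ex₃ α _ _ h β hβ := by
    obtain ⟨t, ht⟩ := σ.ex₆ α _ _ h β hβ
    exact ⟨t.op, ht⟩
  ex₃' α _ _ h t := σ.ex₆' α _ _ h t.unop
  ex₄ α _ _ h t ht := by
    obtain ⟨t', h'⟩ := σ.ex₁ α _ _ h t.unop (congrArg Quiver.Hom.unop ht)
    exact ⟨t'.op, Quiver.Hom.unop_inj h'⟩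
  ex₅ α _ _ h t ht := by
    obtain ⟨t', h'⟩ := σ.ex₂ α _ _ h t.unop ht
    exact ⟨t'.op, Quiver.Hom.unop_inj h'⟩
  ex₅' α _ _ h t := σ.ex₂' α _ _ h t.unop
  ex₆ α _ _ h β hβ := by
    obtain ⟨t, ht⟩ := σ.ex₃ α _ _ h β hβ
    exact ⟨t.op, ht⟩
  ex₆' α _ _ h t := σ.ex₃' α _ _ h t.unop

def extRightOrthogonal (𝒯 : ObjectProperty C) : ObjectProperty C :=
  fun X => ∀ ⦃W⦄, 𝒯 W → σ.ExtVanishes W X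

def extLeftOrthogonal (𝒯 : ObjectProperty C) : ObjectProperty C :=
  fun X => ∀ ⦃W⦄, 𝒯 W → σ.ExtVanishes X W

def IsRigid (𝒯 : ObjectProperty C) : Prop :=
  ∀ ⦃X Y⦄, 𝒯 X → 𝒯 Y → σ.ExtVanishes X Y

def HasCoresolutions (𝒯 : ObjectProperty C) : Prop :=
  ∀ X : C, ∃ (T₀ T₁ : C) (f : X ⟶ T₀) (g : T₀ ⟶ T₁), σ.Conflation f g ∧ 𝒯 T₀ ∧ 𝒯 T₁

def HasResolutions (𝒯 : ObjectProperty C) : Prop :=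
  ∀ X : C, ∃ (T₁ T₀ : C) (f : T₁ ⟶ T₀) (g : T₀ ⟶ X), σ.Conflation f g ∧ 𝒯 T₁ ∧ 𝒯 T₀

variable {σ} {𝒯 : ObjectProperty C}

theorem EnoughInjectives.opposite (h : σ.EnoughInjectives) : σ.opposite.EnoughProjectives :=
  fun X => by
    obtain ⟨I, K, f, g, hfg, hI⟩ := h X.unop
    exact ⟨op K, op I, g.op, f.op, hfg, fun Y => hI Y.unop⟩

theorem EnoughProjectives.opposite (h : σ.EnoughProjectives) : σ.opposite.EnoughInjectives :=
  fun X => by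
    obtain ⟨K, P, f, g, hfg, hP⟩ := h X.unop
    exact ⟨op P, op K, g.op, f.op, hfg, fun Y => hP Y.unop⟩

theorem CY2.extVanishes_symm (h : σ.CY2) {X Y : C} (hXY : σ.ExtVanishes X Y) :
    σ.ExtVanishes Y X := fun β => by
  obtain ⟨e, -⟩ := h
  refine (e Y X).map_eq_zero_iff.mp (LinearMap.ext fun α => ?_)
  simp [hXY α]

theorem CY2.extLeftOrthogonal_eq (h : σ.CY2) :
    σ.extLeftOrthogonal 𝒯 = σ.extRightOrthogonal 𝒯 := by
  ext X
  exact ⟨fun hX _ hW => h.extVanishes_symm (hX hW), fun hX _ hW => h.extVanishes_symm (hX hW)⟩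

theorem IsRigid.opposite (h : σ.IsRigid 𝒯) : σ.opposite.IsRigid 𝒯.op :=
  fun _ _ hX hY => h hY hX

theorem extRightOrthogonal_opposite :
    σ.opposite.extRightOrthogonal 𝒯.op = (σ.extLeftOrthogonal 𝒯).op := by
  ext X
  exact ⟨fun h W hW => h (W := op W) hW, fun h W hW => h hW⟩

theorem prop_of_conflation [𝒯.IsStableUnderRetracts] {X T₀ T₁ : C} {f : X ⟶ T₀}
    {g : T₀ ⟶ T₁} (hfg : σ.Conflation f g) (hX : σ.ExtVanishes T₁ X) (hT₀ : 𝒯 T₀) : 𝒯 X := by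
  obtain ⟨α, hα⟩ := hfg
  rw [hX α] at hα
  obtain ⟨⟨r, hr⟩, -⟩ := σ.realizes_zero f g hα
  exact 𝒯.prop_of_retract ⟨f, r, hr⟩ hT₀

theorem hasCoresolutions_opposite_iff : σ.opposite.HasCoresolutions 𝒯.op ↔ σ.HasResolutions 𝒯 :=
  ⟨fun h X => by
    obtain ⟨T₀, T₁, f, g, hfg, h₀, h₁⟩ := h (op X)
    exact ⟨T₁.unop, T₀.unop, g.unop, f.unop, hfg, h₁, h₀⟩,
  fun h X => by
    obtain ⟨T₁, T₀, f, g, hfg, h₁, h₀⟩ := h X.unop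
    exact ⟨op T₀, op T₁, g.op, f.op, hfg, h₀, h₁⟩⟩

section Additive

variable [HasFiniteBiproducts C]

open ZeroObject in
instance (Z : Cᵒᵖ) : (σ.E.obj Z).PreservesZeroMorphisms :=
  have : Subsingleton ((σ.E.obj Z).obj (0 : C)) :=
    ⟨fun a b => by rw [σ.extVanishes_of_isZero _ (isZero_zero C) a,
      σ.extVanishes_of_isZero _ (isZero_zero C) b]⟩
  Functor.preservesZeroMorphisms_of_map_zero_object (ModuleCat.isZero_of_subsingleton _).isoZero

instance (Z : Cᵒᵖ) : (σ.E.obj Z).Additive :=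
  have := hasBinaryBiproducts_of_finite_biproducts C
  have : PreservesBinaryBiproducts (σ.E.obj Z) := ⟨fun {X Y} =>
    have : Mono ((σ.E.obj Z).biprodComparison X Y) := by
      rw [ModuleCat.mono_iff_injective, injective_iff_map_eq_zero]
      refine fun x hx => σ.eq_zero_of_push_fst_of_push_snd x ?_ ?_
      · simpa [← ConcreteCategory.comp_apply] using
          congrArg (biprod.fst : _ ⊞ _ ⟶ (σ.E.obj Z).obj X) hx
      · simpa [← ConcreteCategory.comp_apply] using
          congrArg (biprod.snd : _ ⊞ _ ⟶ (σ.E.obj Z).obj Y) hx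
    preservesBinaryBiproduct_of_mono_biprodComparison _⟩
  Functor.additive_of_preservesBinaryBiproducts _

/-- Exactness of `E(W, A) → E(W, B) → E(W, Z)` at `E(W, B)`, which is not among the axioms;
it follows from a conflation `W₂ → P → W` with `P` projective. -/
theorem exists_push_eq_of_push_eq_zero {A B Z : C} {α : (σ.E.obj (op Z)).obj A} {f : A ⟶ B}
    {g : B ⟶ Z} (hα : σ.realizes α f g) {W₂ P W : C} {ε : (σ.E.obj (op W)).obj W₂}
    {q : W₂ ⟶ P} {π : P ⟶ W} (hε : σ.realizes ε q π) (hP : σ.Projective P)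
    {β : (σ.E.obj (op W)).obj B} (hβ : (σ.E.obj (op W)).map g β = 0) :
    ∃ γ, (σ.E.obj (op W)).map f γ = β := by
  obtain ⟨u, rfl⟩ := σ.ex₆ ε q π hε β (hP B _)
  obtain ⟨w, hw⟩ := σ.ex₅ ε q π hε (u ≫ g) (by simpa using hβ)
  obtain ⟨w', hw'⟩ := σ.ex₂ α f g hα w (hP A _)
  obtain ⟨u', hu'⟩ := σ.ex₁ α f g hα (u - q ≫ w') (by simp [hw', hw])
  refine ⟨(σ.E.obj (op W)).map u' ε, ?_⟩
  calc (σ.E.obj (op W)).map f ((σ.E.obj (op W)).map u' ε)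
      = (σ.E.obj (op W)).map (u' ≫ f) ε := by simp
    _ = (σ.E.obj (op W)).map u ε - (σ.E.obj (op W)).map (q ≫ w') ε := by
      rw [hu', Functor.map_sub]; rfl
    _ = (σ.E.obj (op W)).map u ε := by rw [σ.ex₅' ε q π hε w', sub_zero]

theorem exists_conflation_extRightOrthogonal (hinj : σ.EnoughInjectives)
    (hproj : σ.EnoughProjectives) (hrigid : σ.IsRigid 𝒯) (hfin : 𝒯.IsContravariantlyFinite)
    (X : C) : ∃ (M T₀ : C) (f : X ⟶ M) (g : M ⟶ T₀),
      σ.Conflation f g ∧ σ.extRightOrthogonal 𝒯 M ∧ 𝒯 T₀ := by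
  obtain ⟨I, K, i, p, ⟨δ, hδ⟩, hI⟩ := hinj X
  obtain ⟨T₀, g, hT₀, hg⟩ := hfin K
  obtain ⟨M, f, h, hα⟩ := σ.realize_exists ((σ.E.map g.op).app X δ)
  refine ⟨M, T₀, f, h, ⟨_, hα⟩, fun W hW β => ?_, hT₀⟩
  obtain ⟨W₂, P, q, π, ⟨ε, hε⟩, hP⟩ := hproj W
  obtain ⟨γ, rfl⟩ := σ.exists_push_eq_of_push_eq_zero (β := β) hα hε hP (hrigid hW hT₀ _)
  -- `γ` is pulled back from `δ` along a map `W ⟶ K`, which factors through `g`.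
  obtain ⟨u, rfl⟩ := σ.ex₃ δ i p hδ γ (hI W _)
  obtain ⟨v, rfl⟩ := hg hW u
  simpa using congrArg ((σ.E.map v.op).app M) (σ.ex₅' _ f h hα (𝟙 M))

theorem hasCoresolutions_iff [𝒯.IsStableUnderRetracts] (hinj : σ.EnoughInjectives)
    (hproj : σ.EnoughProjectives) (hrigid : σ.IsRigid 𝒯) (hfin : 𝒯.IsContravariantlyFinite) :
    σ.HasCoresolutions 𝒯 ↔ σ.extRightOrthogonal 𝒯 ≤ 𝒯 := by
  refine ⟨fun h X hX => ?_, fun h X => ?_⟩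
  · obtain ⟨T₀, T₁, f, g, hfg, hT₀, hT₁⟩ := h X
    exact prop_of_conflation hfg (hX hT₁) hT₀
  · obtain ⟨M, T₀, f, g, hfg, hM, hT₀⟩ :=
      exists_conflation_extRightOrthogonal hinj hproj hrigid hfin X
    exact ⟨M, T₀, f, g, hfg, h M hM, hT₀⟩

theorem hasResolutions_iff [𝒯.IsStableUnderRetracts] (hinj : σ.EnoughInjectives)
    (hproj : σ.EnoughProjectives) (hrigid : σ.IsRigid 𝒯) (hfin : 𝒯.IsCovariantlyFinite) :
    σ.HasResolutions 𝒯 ↔ σ.extLeftOrthogonal 𝒯 ≤ 𝒯 := by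
  rw [← hasCoresolutions_opposite_iff, ← ObjectProperty.op_monotone_iff,
    ← extRightOrthogonal_opposite]
  exact hasCoresolutions_iff hproj.opposite hinj.opposite hrigid.opposite hfin

end Additive

end Extriangulated

section InAdd

variable {C : Type u} [Category.{v} C] [Preadditive C] [HasFiniteBiproducts C]

theorem inAdd_iff_exists_sum_comp_eq_id {T W : C} : InAdd T W ↔
    ∃ (n : ℕ) (s : Fin n → (W ⟶ T)) (r : Fin n → (T ⟶ W)), ∑ j, s j ≫ r j = 𝟙 W := by
  constructor
  · rintro ⟨n, s, r, hsr⟩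
    let B := fun _ : Fin n => T
    refine ⟨n, fun j => s ≫ biproduct.π B j, fun j => biproduct.ι B j ≫ r, ?_⟩
    calc ∑ j, (s ≫ biproduct.π B j) ≫ biproduct.ι B j ≫ r
        = s ≫ (∑ j, biproduct.π B j ≫ biproduct.ι B j) ≫ r := by
          simp only [Preadditive.sum_comp, Preadditive.comp_sum, Category.assoc]
      _ = 𝟙 W := by rw [biproduct.total, Category.id_comp, hsr]
  · rintro ⟨n, s, r, h⟩
    exact ⟨n, biproduct.lift s, biproduct.desc r, by rw [biproduct.lift_desc, h]⟩

theorem inAdd_op_iff {T : C} {W : Cᵒᵖ} : InAdd (op T) W ↔ InAdd T W.unop := by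
  simp only [inAdd_iff_exists_sum_comp_eq_id]
  constructor
  · rintro ⟨n, s, r, h⟩
    exact ⟨n, fun j => (r j).unop, fun j => (s j).unop, by simpa using congrArg Quiver.Hom.unop h⟩
  · rintro ⟨n, s, r, h⟩
    exact ⟨n, fun j => (r j).op, fun j => (s j).op, by simpa using congrArg Quiver.Hom.op h⟩

theorem inAdd_op (T : C) : InAdd (op T) = ObjectProperty.op (InAdd T) :=
  funext fun _ => propext inAdd_op_iff

instance (T : C) : ObjectProperty.IsStableUnderRetracts (InAdd T) where
  of_retract h := fun ⟨n, s, r, hsr⟩ => ⟨n, h.i ≫ s, r ≫ h.r, by simp [reassoc_of% hsr]⟩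

theorem inAdd_self (T : C) : InAdd T T :=
  inAdd_iff_exists_sum_comp_eq_id.2 ⟨1, fun _ => 𝟙 T, fun _ => 𝟙 T, by simp⟩

theorem inAdd_biproduct (T : C) (n : ℕ) : InAdd T (⨁ fun _ : Fin n => T) :=
  ⟨n, 𝟙 _, 𝟙 _, Category.id_comp _⟩

theorem exists_comp_eq_of_inAdd {T K W T₀ : C} {g : T₀ ⟶ K}
    (hg : ∀ u : T ⟶ K, ∃ v, v ≫ g = u) (hW : InAdd T W) (u : W ⟶ K) : ∃ v, v ≫ g = u := by
  obtain ⟨n, s, r, h⟩ := inAdd_iff_exists_sum_comp_eq_id.1 hW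
  choose v hv using fun j => hg (r j ≫ u)
  refine ⟨∑ j, s j ≫ v j, ?_⟩
  simp_rw [Preadditive.sum_comp, Category.assoc, hv, ← Category.assoc, ← Preadditive.sum_comp, h,
    Category.id_comp]

variable [Linear k C]

theorem isContravariantlyFinite_inAdd (T : C) [∀ K : C, FiniteDimensional k (T ⟶ K)] :
    ObjectProperty.IsContravariantlyFinite (InAdd T) := fun K => by
  let b := Module.finBasis k (T ⟶ K)
  refine ⟨_, biproduct.desc b, inAdd_biproduct T _, fun W hW => exists_comp_eq_of_inAdd
    (fun u => ⟨∑ j, b.repr u j • biproduct.ι (fun _ => T) j, ?_⟩) hW⟩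
  simp [Preadditive.sum_comp, b.sum_repr]

theorem isCovariantlyFinite_inAdd (T : C) [∀ K : C, FiniteDimensional k (K ⟶ T)] :
    ObjectProperty.IsCovariantlyFinite (InAdd T) := by
  rw [ObjectProperty.IsCovariantlyFinite, ← inAdd_op]
  exact isContravariantlyFinite_inAdd k (op T)

namespace Extriangulated

variable {k} (σ : Extriangulated k C)

theorem extVanishes_of_inAdd_right {Z T W : C} (hT : σ.ExtVanishes Z T) (hW : InAdd T W) :
    σ.ExtVanishes Z W := fun x => by
  obtain ⟨n, s, r, h⟩ := inAdd_iff_exists_sum_comp_eq_id.1 hW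
  calc x = (σ.E.obj (op Z)).map (∑ j, s j ≫ r j) x := by simp [h]
    _ = 0 := by simp [Functor.map_sum, hT _]

theorem extVanishes_of_inAdd_left {T X W : C} (hT : σ.ExtVanishes T X) (hW : InAdd T W) :
    σ.ExtVanishes W X :=
  σ.opposite.extVanishes_of_inAdd_right (T := op T) (W := op W) hT (inAdd_op_iff.2 hW)

theorem isRigid_inAdd {T : C} (hT : σ.Rigid T) : σ.IsRigid (InAdd T) := fun _ _ hX hY =>
  σ.extVanishes_of_inAdd_left (σ.extVanishes_of_inAdd_right hT hY) hX

theorem extRightOrthogonal_inAdd (T : C) : σ.extRightOrthogonal (InAdd T) = σ.ExtVanishes T := by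
  ext X
  exact ⟨fun h => h (inAdd_self T), fun h _ hW => σ.extVanishes_of_inAdd_left h hW⟩

end Extriangulated

end InAdd

namespace Stmt8

theorem coresolution_iff_and_CY_consequence
    {C : Type u} [Category.{v} C] [Preadditive C] [CategoryTheory.Linear k C]
    [HasFiniteBiproducts C]
    [∀ X Y : C, FiniteDimensional k (X ⟶ Y)]
    (σ : Extriangulated k C) (hFrob : σ.Frobenius)
    (T : C) (hbasic : Basic T) (hrigid : σ.Rigid T) :
    ((∀ X : C, ∃ (T₀ T₁ : C) (f : X ⟶ T₀) (g : T₀ ⟶ T₁),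
        σ.Conflation f g ∧ InAdd T T₀ ∧ InAdd T T₁)
      ↔ (∀ X : C, (∀ α : (σ.E.obj (op T)).obj X, α = 0) → InAdd T X)) ∧
    (σ.CY2 →
      ((∀ X : C, ∃ (T₁ T₀ : C) (f : T₁ ⟶ T₀) (g : T₀ ⟶ X),
          σ.Conflation f g ∧ InAdd T T₁ ∧ InAdd T T₀)
        ↔ (∀ X : C, ∃ (T₀ T₁ : C) (f : X ⟶ T₀) (g : T₀ ⟶ T₁),
            σ.Conflation f g ∧ InAdd T T₀ ∧ InAdd T T₁))) := by
  obtain ⟨hproj, hinj, -⟩ := hFrob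
  have hrigid' := σ.isRigid_inAdd hrigid
  have hcores := Extriangulated.hasCoresolutions_iff hinj hproj hrigid'
    (isContravariantlyFinite_inAdd k T)
  rw [σ.extRightOrthogonal_inAdd] at hcores
  refine ⟨hcores, fun hCY => ?_⟩
  have hres := Extriangulated.hasResolutions_iff hinj hproj hrigid'
    (isCovariantlyFinite_inAdd k T)
  rw [hCY.extLeftOrthogonal_eq, σ.extRightOrthogonal_inAdd] at hres
  exact hres.trans hcores.symm

end Stmt8
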